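/- arXiv:cs/0501035 — 3 statements merged into one kernel-verified Lean document; each statement's English description precedes it below -/
import Mathlib

section
/- The trace of a stable function between coherence spaces is a clique of !E ⊸ E': for tokens (x₁,e'₁), (x₂,e'₂) of trace(f), if x₁ ∪ x₂ is a clique of E then e'₁ ≍ e'₂, and if moreover e'₁ = e'₂ then x₁ = x₂. -/
def IsClique {α : Type*} (r : α → α → Prop) (x : Set α) : Prop :=
  ∀ a ∈ x, ∀ b ∈ x, r a b

/-- The trace of a stable function is a clique of `!E ⊸ E'`. -/
theorem trace_is_clique {α β : Type*}
    (r : α → α → Prop) (s : β → β → Prop)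
    (hr_refl : ∀ a, r a a) (hr_symm : ∀ a b, r a b → r b a)
    (hs_refl : ∀ b, s b b) (hs_symm : ∀ a b, s a b → s b a)
    (f : Set α → Set β)
    (hclq : ∀ x, IsClique r x → IsClique s (f x))
    (hmono : ∀ x y, IsClique r y → x ⊆ y → f x ⊆ f y)
    (hstab : ∀ x y, IsClique r (x ∪ y) → f (x ∩ y) = f x ∩ f y)
    (x₁ x₂ : Set α) (e₁ e₂ : β)
    (h₁ : IsClique r x₁ ∧ x₁.Finite ∧ e₁ ∈ f x₁ ∧ ∀ y ⊂ x₁, e₁ ∉ f y)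
    (h₂ : IsClique r x₂ ∧ x₂.Finite ∧ e₂ ∈ f x₂ ∧ ∀ y ⊂ x₂, e₂ ∉ f y)
    (hcompat : IsClique r (x₁ ∪ x₂)) :
    s e₁ e₂ ∧ (e₁ = e₂ → x₁ = x₂) := by
  obtain ⟨hc₁, hf₁, he₁, hmin₁⟩ := h₁
  obtain ⟨hc₂, hf₂, he₂, hmin₂⟩ := h₂
  have h1u : e₁ ∈ f (x₁ ∪ x₂) := hmono x₁ (x₁ ∪ x₂) hcompat Set.subset_union_left he₁
  have h2u : e₂ ∈ f (x₁ ∪ x₂) := hmono x₂ (x₁ ∪ x₂) hcompat Set.subset_union_right he₂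
  refine ⟨hclq _ hcompat _ h1u _ h2u, fun heq => ?_⟩
  subst heq
  have hint : e₁ ∈ f (x₁ ∩ x₂) := by
    rw [hstab _ _ hcompat]; exact ⟨he₁, he₂⟩
  have h12 : x₁ ⊆ x₂ := by
    by_contra h
    exact hmin₁ (x₁ ∩ x₂) ⟨Set.inter_subset_left, fun hs =>
      h (fun a ha => (hs ha).2)⟩ hint
  have h21 : x₂ ⊆ x₁ := by
    by_contra h
    exact hmin₂ (x₁ ∩ x₂) ⟨Set.inter_subset_right, fun hs =>
      h (fun a ha => (hs ha).1)⟩ hint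
  exact Set.Subset.antisymm h12 h21
end

section
/- Stability implies uniqueness of minimal points: if f : D(E) → D(E') is a stable function, z is a clique, and e' ∈ f(z), then (assuming continuity) there exists a finite clique x ⊆ z minimal with e' ∈ f(x), and this x is unique among subsets of z: any two x, y ⊆ z minimal with e' ∈ f(x), e' ∈ f(y) are equal. -/
/-- Stability implies existence and uniqueness of minimal points. -/
theorem stable_minimal_points {α β : Type*}
    (r : α → α → Prop) (s : β → β → Prop)
    (hr_refl : ∀ a, r a a) (hr_symm : ∀ a b, r a b → r b a)
    (hs_refl : ∀ b, s b b) (hs_symm : ∀ a b, s a b → s b a)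
    (f : Set α → Set β)
    (hclq : ∀ x, IsClique r x → IsClique s (f x))
    (hmono : ∀ x y, IsClique r y → x ⊆ y → f x ⊆ f y)
    (hcont : ∀ D : Set (Set α), D.Nonempty → (∀ x ∈ D, IsClique r x) →
      DirectedOn (· ⊆ ·) D → f (⋃₀ D) = ⋃ x ∈ D, f x)
    (hstab : ∀ x y, IsClique r (x ∪ y) → f (x ∩ y) = f x ∩ f y)
    (z : Set α) (hz : IsClique r z) (e' : β) (he' : e' ∈ f z) :
    (∃ x ⊆ z, x.Finite ∧ e' ∈ f x ∧ ∀ y ⊂ x, e' ∉ f y) ∧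
    (∀ x y, (x ⊆ z ∧ e' ∈ f x ∧ ∀ u ⊂ x, e' ∉ f u) →
      (y ⊆ z ∧ e' ∈ f y ∧ ∀ u ⊂ y, e' ∉ f u) → x = y) := by
  constructor
  · -- existence
    -- first get a finite x₀ ⊆ z with e' ∈ f x₀ via continuity
    set D : Set (Set α) := {x | x ⊆ z ∧ x.Finite} with hD
    have hDz : ⋃₀ D = z := by
      apply subset_antisymm
      · exact Set.sUnion_subset fun x hx => hx.1
      · intro a ha
        exact ⟨{a}, ⟨Set.singleton_subset_iff.2 ha, Set.finite_singleton a⟩, rfl⟩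
    have hx0 : ∃ x₀ ⊆ z, x₀.Finite ∧ e' ∈ f x₀ := by
      have := hcont D ⟨∅, by simp [hD]⟩
        (fun x hx => fun a ha b hb => hz a (hx.1 ha) b (hx.1 hb))
        (fun x hx y hy => ⟨x ∪ y, ⟨Set.union_subset hx.1 hy.1, hx.2.union hy.2⟩,
          Set.subset_union_left, Set.subset_union_right⟩)
      rw [hDz] at this
      rw [this] at he'
      simp only [Set.mem_iUnion] at he'
      obtain ⟨x₀, hx₀, hmem⟩ := he'
      exact ⟨x₀, hx₀.1, hx₀.2, hmem⟩
    obtain ⟨x₀, hx₀z, hx₀f, hx₀m⟩ := hx0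
    -- strong induction on cardinality
    clear hDz hD
    have key : ∀ n : ℕ, ∀ x : Set α, x ⊆ z → (hf : x.Finite) → hf.toFinset.card = n →
        e' ∈ f x → ∃ x' ⊆ z, x'.Finite ∧ e' ∈ f x' ∧ ∀ y ⊂ x', e' ∉ f y := by
      intro n
      induction n using Nat.strong_induction_on with
      | _ n ih =>
        intro x hxz hf hcard hmem
        by_cases hmin : ∀ y ⊂ x, e' ∉ f y
        · exact ⟨x, hxz, hf, hmem, hmin⟩
        · push_neg at hmin
          obtain ⟨y, hyx, hyf⟩ := hmin
          have hyfin : y.Finite := hf.subset hyx.1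
          have hlt : hyfin.toFinset.card < n := by
            rw [← hcard]
            exact Set.Finite.toFinset_ssubset_toFinset.2 hyx |> Finset.card_lt_card
          exact ih _ hlt y (hyx.1.trans hxz) hyfin rfl hyf
    exact key _ x₀ hx₀z hx₀f rfl hx₀m
  · -- uniqueness
    rintro x y ⟨hxz, hxf, hxmin⟩ ⟨hyz, hyf, hymin⟩
    have hclq : IsClique r (x ∪ y) := fun a ha b hb => by
      rcases ha with ha | ha <;> rcases hb with hb | hb <;>
        exact hz _ (by first | exact hxz ha | exact hyz ha) _
          (by first | exact hxz hb | exact hyz hb)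
    have hmem : e' ∈ f (x ∩ y) := by
      rw [hstab x y hclq]; exact ⟨hxf, hyf⟩
    have h1 : x ∩ y = x := by
      by_contra h
      exact hxmin (x ∩ y) ⟨Set.inter_subset_left, fun hc => h (subset_antisymm Set.inter_subset_left hc)⟩ hmem
    have h2 : x ∩ y = y := by
      by_contra h
      exact hymin (x ∩ y) ⟨Set.inter_subset_right, fun hc => h (subset_antisymm Set.inter_subset_right hc)⟩ hmem
    rw [← h1, h2]
end

section
/- The stable order is trace inclusion: for stable functions f, g between coherence spaces, f ≤ₛ g (i.e., f(x) ⊆ g(x) pointwise and f(x) = g(x) ∩ f(y) whenever x ⊆ y) implies trace(f) ⊆ trace(g), and conversely. -/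
/-- The trace of a function from cliques to cliques. -/
def trace {α β : Type*} (r : α → α → Prop) (f : Set α → Set β) :
    Set (Set α × β) :=
  {p | IsClique r p.1 ∧ p.1.Finite ∧ p.2 ∈ f p.1 ∧ ∀ y ⊂ p.1, p.2 ∉ f y}

lemma isClique_mono {α : Type*} {r : α → α → Prop} {x y : Set α}
    (hy : IsClique r y) (hxy : x ⊆ y) : IsClique r x :=
  fun a ha b hb => hy a (hxy ha) b (hxy hb)

/-- Every output element comes from a minimal finite sub-clique. -/
lemma exists_trace_mem {α β : Type*} {r : α → α → Prop} {f : Set α → Set β}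
    (hfcont : ∀ D : Set (Set α), D.Nonempty → (∀ x ∈ D, IsClique r x) →
      DirectedOn (· ⊆ ·) D → f (⋃₀ D) = ⋃ x ∈ D, f x)
    {x : Set α} (hx : IsClique r x) {e : β} (he : e ∈ f x) :
    ∃ z, z ⊆ x ∧ (z, e) ∈ trace r f := by
  classical
  set D : Set (Set α) := {x' | x' ⊆ x ∧ x'.Finite} with hD
  have hDne : D.Nonempty := ⟨∅, by simp [hD]⟩
  have hDclq : ∀ x' ∈ D, IsClique r x' := fun x' hx' => isClique_mono hx hx'.1
  have hDdir : DirectedOn (· ⊆ ·) D := by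
    rintro a ⟨ha1, ha2⟩ b ⟨hb1, hb2⟩
    exact ⟨a ∪ b, ⟨Set.union_subset ha1 hb1, ha2.union hb2⟩,
      Set.subset_union_left, Set.subset_union_right⟩
  have hsU : ⋃₀ D = x := by
    apply Set.Subset.antisymm
    · exact Set.sUnion_subset fun t ht => ht.1
    · intro a ha
      exact ⟨{a}, ⟨Set.singleton_subset_iff.2 ha, Set.finite_singleton a⟩, rfl⟩
  have hcont := hfcont D hDne hDclq hDdir
  rw [hsU] at hcont
  rw [hcont] at he
  obtain ⟨x₀, hx₀D, hex₀⟩ := Set.mem_iUnion₂.1 he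
  -- choose a subset of x₀ of minimal cardinality with e ∈ f ·
  set S : Set (Set α) := {z | z ⊆ x₀ ∧ e ∈ f z} with hS
  have hSfin : S.Finite := (Set.Finite.finite_subsets hx₀D.2).subset fun z hz => hz.1
  have hSne : S.Nonempty := ⟨x₀, Set.Subset.rfl, hex₀⟩
  obtain ⟨z, hzS, hzmin⟩ := Set.exists_min_image S Set.ncard hSfin hSne
  have hzx₀ : z ⊆ x₀ := hzS.1
  have hzfin : z.Finite := hx₀D.2.subset hzx₀
  refine ⟨z, hzx₀.trans hx₀D.1, isClique_mono hx (hzx₀.trans hx₀D.1), hzfin, hzS.2, ?_⟩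
  intro y hy hey
  have hyS : y ∈ S := ⟨hy.subset.trans hzx₀, hey⟩
  have := hzmin y hyS
  exact absurd (Set.ncard_lt_ncard hy hzfin) (not_lt.2 this)

/-- The stable order coincides with trace inclusion. -/
theorem stable_order_iff_trace_subset {α β : Type*}
    (r : α → α → Prop) (s : β → β → Prop)
    (hr_refl : ∀ a, r a a) (hr_symm : ∀ a b, r a b → r b a)
    (hs_refl : ∀ b, s b b) (hs_symm : ∀ a b, s a b → s b a)
    (f g : Set α → Set β)
    (hfclq : ∀ x, IsClique r x → IsClique s (f x))
    (hfmono : ∀ x y, IsClique r y → x ⊆ y → f x ⊆ f y)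
    (hfcont : ∀ D : Set (Set α), D.Nonempty → (∀ x ∈ D, IsClique r x) →
      DirectedOn (· ⊆ ·) D → f (⋃₀ D) = ⋃ x ∈ D, f x)
    (hfstab : ∀ x y, IsClique r (x ∪ y) → f (x ∩ y) = f x ∩ f y)
    (hgclq : ∀ x, IsClique r x → IsClique s (g x))
    (hgmono : ∀ x y, IsClique r y → x ⊆ y → g x ⊆ g y)
    (hgcont : ∀ D : Set (Set α), D.Nonempty → (∀ x ∈ D, IsClique r x) →
      DirectedOn (· ⊆ ·) D → g (⋃₀ D) = ⋃ x ∈ D, g x)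
    (hgstab : ∀ x y, IsClique r (x ∪ y) → g (x ∩ y) = g x ∩ g y) :
    ((∀ x, IsClique r x → f x ⊆ g x) ∧
      (∀ x y, IsClique r y → x ⊆ y → f x = g x ∩ f y)) ↔
    trace r f ⊆ trace r g := by
  constructor
  · rintro ⟨h1, h2⟩ ⟨x, e⟩ ⟨hclq, hfin, hmem, hmin⟩
    refine ⟨hclq, hfin, h1 x hclq hmem, ?_⟩
    intro y hy hge
    have := h2 y x hclq hy.subset
    exact hmin y hy (this ▸ ⟨hge, hmem⟩)
  · intro htr
    have h1 : ∀ x, IsClique r x → f x ⊆ g x := by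
      intro x hx e he
      obtain ⟨z, hzx, htz⟩ := exists_trace_mem hfcont hx he
      have hgz := (htr htz).2.2.1
      exact hgmono z x hx hzx hgz
    refine ⟨h1, ?_⟩
    intro x y hy hxy
    have hx : IsClique r x := isClique_mono hy hxy
    apply Set.Subset.antisymm
    · intro e he
      exact ⟨h1 x hx he, hfmono x y hy hxy he⟩
    · rintro e ⟨hegx, hefy⟩
      obtain ⟨z, hzy, htz⟩ := exists_trace_mem hfcont hy hefy
      have htgz := htr htz
      have hclqzx : IsClique r (z ∪ x) :=
        isClique_mono hy (Set.union_subset hzy hxy)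
      have hstab := hgstab z x hclqzx
      have hezx : e ∈ g (z ∩ x) := hstab ▸ ⟨htgz.2.2.1, hegx⟩
      have hzsubx : z ⊆ x := by
        by_contra hns
        have hss : z ∩ x ⊂ z :=
          ⟨Set.inter_subset_left, fun h => hns fun a ha => (h ha).2⟩
        exact htgz.2.2.2 (z ∩ x) hss hezx
      exact hfmono z x hx hzsubx htz.2.2.1
end
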